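/- Let T be a bounded operator on a complex Hilbert space H with polar decomposition T = U|T|, and let n ∈ ℕ be such that T is (n+1)-centered. Then for every k with 1 ≤ k ≤ n, U^k(U^k)^* commutes with |T| and (U^k)^*U^k commutes with |T^*|. -/

import Mathlib

open ContinuousLinearMap

variable {H : Type*} [NormedAddCommGroup H] [InnerProductSpace ℂ H] [CompleteSpace H]

/-- The absolute value `|T| = (T^*T)^(1/2)` of a bounded operator on a complex
Hilbert space, defined via the continuous functional calculus. -/
noncomputable def absOp (T : H →L[ℂ] H) : H →L[ℂ] H :=
  cfc Real.sqrt (adjoint T * T)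

/-- The orthogonal projection of `H` onto the closure of the range of `T`,
regarded as an operator on `H`. -/
noncomputable def rangeProjOp (T : H →L[ℂ] H) : H →L[ℂ] H :=
  (LinearMap.range (T : H →ₗ[ℂ] H)).topologicalClosure.subtypeL ∘L
    Submodule.orthogonalProjectionOnto (LinearMap.range (T : H →ₗ[ℂ] H)).topologicalClosure

/-- `U` is a partial isometry: `U^*U` is an orthogonal projection
(a self-adjoint idempotent). -/
def IsPartialIsometryOp (U : H →L[ℂ] H) : Prop :=
  IsSelfAdjoint (adjoint U * U) ∧ (adjoint U * U) * (adjoint U * U) = adjoint U * U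

/-- `T = U|T|` is the polar decomposition of `T`: `U` is a partial isometry and
`U^*U` is the orthogonal projection onto the closure of the range of `T^*`. -/
def IsPolarDecompositionOp (T U : H →L[ℂ] H) : Prop :=
  T = U * absOp T ∧ IsPartialIsometryOp U ∧ adjoint U * U = rangeProjOp (adjoint T)

/-- `T` (with polar decomposition `T = U|T|`) is `n`-centered: for every
`1 ≤ k ≤ n`, `T^k = U^k |T^k|` is the polar decomposition of `T^k`. -/
def IsNCentered (n : ℕ) (T U : H →L[ℂ] H) : Prop :=
  ∀ k : ℕ, 1 ≤ k → k ≤ n → IsPolarDecompositionOp (T ^ k) (U ^ k)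

/-!
Write `V = U^k`. Since `U`, `V` and `UV = U^(k+1)` are partial isometries, the product of the
projections `U^*U` and `VV^*` is idempotent, so they commute. Hence
`|T| T^k = U^* T^(k+1) = U^*U V |T^(k+1)|` lies in the range of `VV^*`, the projection onto the
closure of the range of `T^k`. This closed subspace is thus invariant under the self-adjoint
operator `|T|`, which therefore commutes with `VV^*`. The second claim is the first one for
`T^* = U^*|T^*|`, which is again a polar decomposition, of an `(n+1)`-centered operator.
-/

section CStarRing

variable {A : Type*}

def IsPartialIsometry [Mul A] [Star A] (v : A) : Prop :=
  IsStarProjection (star v * v)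

theorem IsStarProjection.commute_of_mul_mul_eq [Semigroup A] [StarMul A] {p a : A}
    (hp : IsStarProjection p) (ha : IsSelfAdjoint a) (h : p * a * p = a * p) : Commute p a := by
  have h' : p * a * p = p * a := by
    simpa only [star_mul, hp.isSelfAdjoint.star_eq, ha.star_eq, mul_assoc] using congrArg star h
  exact h'.symm.trans h

variable [NonUnitalNormedRing A] [StarRing A] [CStarRing A]

theorem IsPartialIsometry.mul_star_mul_self {v : A} (hv : IsPartialIsometry v) :
    v * (star v * v) = v := by
  set p := star v * v with hp_def
  have hp : p * p = p := hv.isIdempotentElem.eq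
  have hzero : star (v * p - v) * (v * p - v) = 0 := by
    have : star (v * p - v) * (v * p - v) = p * p * p - p * p - p * p + p := by
      simp only [star_sub, star_mul, hv.isSelfAdjoint.star_eq, hp_def]; noncomm_ring
    rw [this, hp, hp]; abel
  exact sub_eq_zero.mp ((CStarRing.star_mul_self_eq_zero_iff _).mp hzero)

theorem IsPartialIsometry.isStarProjection_mul_star {v : A} (hv : IsPartialIsometry v) :
    IsStarProjection (v * star v) where
  isIdempotentElem := by
    rw [IsIdempotentElem, ← mul_assoc (v * star v), mul_assoc v, hv.mul_star_mul_self]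
  isSelfAdjoint := .mul_star_self v

theorem isPartialIsometry_star {v : A} (hv : IsPartialIsometry v) : IsPartialIsometry (star v) := by
  simpa only [IsPartialIsometry, star_star] using hv.isStarProjection_mul_star

theorem IsStarProjection.commute_of_isIdempotentElem_mul {p q : A} (hp : IsStarProjection p)
    (hq : IsStarProjection q) (hpq : IsIdempotentElem (p * q)) : Commute p q := by
  have hpp : ∀ x, p * (p * x) = p * x := fun x => by rw [← mul_assoc, hp.isIdempotentElem.eq]
  have hqq : ∀ x, q * (q * x) = q * x := fun x => by rw [← mul_assoc, hq.isIdempotentElem.eq]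
  have hpqpq : ∀ x, p * (q * (p * (q * x))) = p * (q * x) := fun x => by
    simpa only [mul_assoc] using congrArg (· * x) hpq.eq
  have hzero : (p * q - p * q * p) * star (p * q - p * q * p) = 0 := by
    simp only [star_sub, star_mul, hp.isSelfAdjoint.star_eq, hq.isSelfAdjoint.star_eq, mul_sub,
      sub_mul, mul_assoc, hpp, hqq, hpqpq, sub_self]
  have h : p * q = p * q * p := sub_eq_zero.mp ((CStarRing.mul_star_self_eq_zero_iff _).mp hzero)
  have h' : q * p = p * q * p := by
    simpa only [star_mul, hp.isSelfAdjoint.star_eq, hq.isSelfAdjoint.star_eq, mul_assoc]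
      using congrArg star h
  exact h.trans h'.symm

theorem IsPartialIsometry.commute_star_mul_self_mul_star {u v : A} (hu : IsPartialIsometry u)
    (hv : IsPartialIsometry v) (huv : IsPartialIsometry (u * v)) :
    Commute (star u * u) (v * star v) := by
  refine IsStarProjection.commute_of_isIdempotentElem_mul hu hv.isStarProjection_mul_star ?_
  have := congrArg (fun x => star u * x * star v) huv.mul_star_mul_self
  simp only [star_mul, mul_assoc] at this
  simp only [IsIdempotentElem, mul_assoc, this]

end CStarRing

theorem isStarProjection_rangeProjOp (S : H →L[ℂ] H) : IsStarProjection (rangeProjOp S) :=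
  isStarProjection_starProjection

theorem rangeProjOp_mul_self (S : H →L[ℂ] H) : rangeProjOp S * S = S := by
  ext x
  exact Submodule.starProjection_eq_self_iff.mpr
    (Submodule.le_topologicalClosure _ (LinearMap.mem_range_self _ x))

theorem mul_rangeProjOp_self {S : H →L[ℂ] H} (hS : IsSelfAdjoint S) : S * rangeProjOp S = S := by
  simpa only [star_mul, hS.star_eq, (isStarProjection_rangeProjOp S).isSelfAdjoint.star_eq]
    using congrArg star (rangeProjOp_mul_self S)

theorem mul_rangeProjOp_eq_of_mul_eq {X Y S : H →L[ℂ] H} (h : X * S = Y * S) :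
    X * rangeProjOp S = Y * rangeProjOp S := by
  ext x
  have hx : rangeProjOp S x ∈ closure (LinearMap.range (S : H →ₗ[ℂ] H) : Set H) := by
    rw [← Submodule.topologicalClosure_coe]
    exact Submodule.starProjection_apply_mem _ x
  refine Set.EqOn.closure (f := X) (g := Y) ?_ X.continuous Y.continuous hx
  rintro - ⟨y, rfl⟩
  exact congr($h y)

theorem absOp_eq_cfcAbs (T : H →L[ℂ] H) : absOp T = CFC.abs T := by
  rw [CFC.abs, CFC.sqrt_eq_real_sqrt _ (star_mul_self_nonneg T), cfcₙ_eq_cfc, star_eq_adjoint, absOp]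

theorem isSelfAdjoint_absOp (T : H →L[ℂ] H) : IsSelfAdjoint (absOp T) :=
  (absOp_eq_cfcAbs T ▸ CFC.abs_nonneg T).isSelfAdjoint

theorem absOp_mul_absOp (T : H →L[ℂ] H) : absOp T * absOp T = star T * T := by
  rw [absOp_eq_cfcAbs, CFC.abs_mul_abs]

namespace IsPolarDecompositionOp

variable {S V : H →L[ℂ] H}

theorem isPartialIsometry (h : IsPolarDecompositionOp S V) : IsPartialIsometry V :=
  ⟨h.2.1.2, h.2.1.1⟩

theorem star_mul_self (h : IsPolarDecompositionOp S V) : star V * V = rangeProjOp (star S) :=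
  h.2.2

theorem star_eq (h : IsPolarDecompositionOp S V) : star S = absOp S * star V := by
  simpa only [star_mul, (isSelfAdjoint_absOp S).star_eq] using congrArg star h.1

theorem star_mul_self_mul_absOp (h : IsPolarDecompositionOp S V) :
    star V * V * absOp S = absOp S := by
  have hsq : star V * V * absOp S * absOp S = absOp S * absOp S := by
    rw [mul_assoc, absOp_mul_absOp, ← mul_assoc, h.star_mul_self, rangeProjOp_mul_self]
  simpa only [mul_assoc, mul_rangeProjOp_self (isSelfAdjoint_absOp S)]
    using mul_rangeProjOp_eq_of_mul_eq hsq

theorem star_mul_eq_absOp (h : IsPolarDecompositionOp S V) : star V * S = absOp S := by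
  conv_lhs => rw [h.1, ← mul_assoc]
  exact h.star_mul_self_mul_absOp

theorem mul_star_self (h : IsPolarDecompositionOp S V) : V * star V = rangeProjOp S := by
  have hV := h.isPartialIsometry.mul_star_mul_self
  have hP := h.isPartialIsometry.isStarProjection_mul_star
  have hR := isStarProjection_rangeProjOp S
  have hPS : V * star V * S = S := by
    conv_lhs => rw [h.1, ← mul_assoc, mul_assoc V, hV, ← h.1]
  have hRV : rangeProjOp S * V = V := by
    have hS : rangeProjOp S * V * star S = V * star S := by
      rw [h.star_eq, ← mul_assoc, ← mul_assoc, mul_assoc _ V, ← h.1, rangeProjOp_mul_self]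
    simpa only [← h.star_mul_self, mul_assoc, hV] using mul_rangeProjOp_eq_of_mul_eq hS
  have hRP : rangeProjOp S * (V * star V) = V * star V := by rw [← mul_assoc, hRV]
  have hPR : V * star V * rangeProjOp S = rangeProjOp S := by
    simpa only [one_mul] using mul_rangeProjOp_eq_of_mul_eq (hPS.trans (one_mul S).symm)
  exact le_antisymm (hP.le_of_mul_eq_right hR hRP) (hR.le_of_mul_eq_right hP hPR)

theorem absOp_star (h : IsPolarDecompositionOp S V) :
    absOp (star S) = V * absOp S * star V := by
  rw [absOp_eq_cfcAbs, CFC.abs, star_star]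
  refine CFC.sqrt_unique ?_ (star_right_conjugate_nonneg (absOp_eq_cfcAbs S ▸ CFC.abs_nonneg S) V)
  calc V * absOp S * star V * (V * absOp S * star V)
      = V * absOp S * (star V * (V * absOp S)) * star V := by simp only [mul_assoc]
    _ = S * star S := by rw [← h.1, h.star_mul_eq_absOp, mul_assoc, ← h.star_eq]

protected theorem star (h : IsPolarDecompositionOp S V) :
    IsPolarDecompositionOp (star S) (star V) := by
  have hV := isPartialIsometry_star h.isPartialIsometry
  refine ⟨?_, ⟨hV.isSelfAdjoint, hV.isIdempotentElem⟩, ?_⟩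
  · rw [h.absOp_star, ← mul_assoc, ← mul_assoc, h.star_mul_self_mul_absOp, h.star_eq]
  · show star (star V) * star V = rangeProjOp (star (star S))
    rw [star_star, star_star, h.mul_star_self]

end IsPolarDecompositionOp

theorem IsNCentered.star {n : ℕ} {T U : H →L[ℂ] H} (h : IsNCentered n T U) :
    IsNCentered n (star T) (star U) := fun k hk₁ hkn => by
  simpa only [star_pow] using (h k hk₁ hkn).star

theorem commute_pow_mul_star_pow_absOp {T U : H →L[ℂ] H} {k : ℕ}
    (h : IsPolarDecompositionOp T U) (hk : IsPolarDecompositionOp (T ^ k) (U ^ k))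
    (hk₁ : IsPolarDecompositionOp (T ^ (k + 1)) (U ^ (k + 1))) :
    Commute (U ^ k * star (U ^ k)) (absOp T) := by
  set V := U ^ k
  have hVV : V * star V * V = V := by rw [mul_assoc]; exact hk.isPartialIsometry.mul_star_mul_self
  have hQP : Commute (star U * U) (V * star V) :=
    h.isPartialIsometry.commute_star_mul_self_mul_star hk.isPartialIsometry
      (pow_succ' U k ▸ hk₁.isPartialIsometry)
  have hrange : absOp T * T ^ k = star U * U * V * absOp (T ^ (k + 1)) := by
    conv_lhs => rw [← h.star_mul_eq_absOp, mul_assoc, ← pow_succ', hk₁.1, pow_succ' U k]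
    simp only [mul_assoc, V]
  have hinv : V * star V * absOp T * T ^ k = absOp T * T ^ k := by
    calc V * star V * absOp T * T ^ k
        = (V * star V) * (star U * U) * V * absOp (T ^ (k + 1)) := by
          rw [mul_assoc _ (absOp T), hrange]; simp only [mul_assoc]
      _ = absOp T * T ^ k := by
          rw [← hQP.eq, hrange, mul_assoc (star U * U), hVV]
  have hPAP := mul_rangeProjOp_eq_of_mul_eq hinv
  rw [← hk.mul_star_self] at hPAP
  exact hk.isPartialIsometry.isStarProjection_mul_star.commute_of_mul_mul_eq
    (isSelfAdjoint_absOp T) hPAP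

/-- If `T` is `(n+1)`-centered, then `U^k(U^k)^*` commutes with `|T|` and
`(U^k)^* U^k` commutes with `|T^*|` for `1 ≤ k ≤ n`. -/
theorem commute_proj_absOp_of_isNCentered (T U : H →L[ℂ] H)
    (hT : IsPolarDecompositionOp T U) (n : ℕ)
    (hc : IsNCentered (n + 1) T U) :
    ∀ k : ℕ, 1 ≤ k → k ≤ n →
      Commute (U ^ k * adjoint (U ^ k)) (absOp T) ∧
      Commute (adjoint (U ^ k) * U ^ k) (absOp (adjoint T)) := by
  intro k hk₁ hkn
  simp only [← star_eq_adjoint]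
  constructor
  · exact commute_pow_mul_star_pow_absOp hT (hc k hk₁ (by omega)) (hc (k + 1) (by omega) (by omega))
  · simpa only [← star_pow, star_star] using commute_pow_mul_star_pow_absOp hT.star
      (hc.star k hk₁ (by omega)) (hc.star (k + 1) (by omega) (by omega))
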